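/- arXiv:1705.02969 — 2 statements merged into one kernel-verified Lean document; each statement's English description precedes it below -/
import Mathlib

section
/- Let f : ℝ^d → ℝ be differentiable, c-strongly convex with L-Lipschitz gradient, φ : X → ℝ convex on a closed convex X ⊆ ℝ^d, and x* the unique minimizer of g = f + φ over X. Fix x ∈ X, G ∈ ℝ^d, α ∈ (0, 1/L), set ε = G − ∇f(x), and let x⁺ = argmin_{u ∈ X} { f(x) + ⟨G, u − x⟩ + (1/(2α))‖u − x‖² + φ(u) }. Then ‖x⁺ − x*‖² ≤ (1 − cα)‖x − x*‖² + (α²/(1 − Lα))‖ε‖² + 2α⟨ε, x* − x⟩. -/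
open Real
open scoped RealInnerProductSpace

/-! `x⁺` minimises a `1/α`-strongly convex function on `X`, so comparing its value at `x⁺` and at
`x*` gains `‖x* - x⁺‖² / (2α)` (the three-point inequality). Bounding `f x⁺` from above by
`L`-smoothness at `x`, `f x*` from below by strong convexity at `x`, and using `g x* ≤ g x⁺`, all
function values cancel; what remains beyond the claimed terms is
`-(1 - Lα)‖x⁺ - x‖² - 2α⟪ε, x⁺ - x⟫`, which Young's inequality bounds by `α²/(1 - Lα)‖ε‖²`. -/

open Set Filter Topology

section NormedSpace

variable {E : Type*} [NormedAddCommGroup E] [NormedSpace ℝ E] {s : Set E} {m : ℝ} {f : E → ℝ}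

lemma StrongConvexOn.add_half_mul_norm_sq_le_of_isMinOn {a b : E} (hf : StrongConvexOn s m f)
    (hmin : IsMinOn f s a) (ha : a ∈ s) (hb : b ∈ s) :
    f a + m / 2 * ‖b - a‖ ^ 2 ≤ f b := by
  set K := m / 2 * ‖b - a‖ ^ 2
  have hsegment : ∀ t ∈ Ioo (0 : ℝ) 1, f a + (1 - t) * K ≤ f b := fun t ⟨ht0, ht1⟩ => by
    have hle : f a ≤ f ((1 - t) • a + t • b) :=
      hmin (hf.1 ha hb (sub_nonneg.2 ht1.le) ht0.le (sub_add_cancel 1 t))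
    have hconv : f ((1 - t) • a + t • b) ≤ (1 - t) * f a + t * f b - (1 - t) * t * K := by
      simpa [K, norm_sub_rev] using hf.2 ha hb (sub_nonneg.2 ht1.le) ht0.le (sub_add_cancel 1 t)
    have : t * (f a + (1 - t) * K) ≤ t * f b := by linear_combination hle + hconv
    exact le_of_mul_le_mul_left this ht0
  have hlim : Tendsto (fun t : ℝ => f a + (1 - t) * K) (𝓝[>] 0) (𝓝 (f a + K)) :=
    tendsto_nhdsWithin_of_tendsto_nhds <|
      (show Continuous fun t : ℝ => f a + (1 - t) * K by fun_prop).tendsto' 0 _ (by simp)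
  exact le_of_tendsto hlim (by filter_upwards [Ioo_mem_nhdsGT one_pos] using hsegment)

lemma StrongConvexOn.add_convexOn {g : E → ℝ} (hf : StrongConvexOn s m f)
    (hg : ConvexOn ℝ s g) : StrongConvexOn s m (f + g) := by
  simpa [StrongConvexOn] using hf.add hg.uniformConvexOn_zero

end NormedSpace

section InnerProductSpace

variable {E : Type*} [NormedAddCommGroup E] [InnerProductSpace ℝ E] {s : Set E} {f φ : E → ℝ}

lemma HasGradientAt.hasDerivAt_comp_add_smul [CompleteSpace E] {u w g : E} {t : ℝ}
    (h : HasGradientAt f g (u + t • w)) :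
    HasDerivAt (fun r : ℝ => f (u + r • w)) ⟪g, w⟫ t := by
  have hline : HasDerivAt (fun r : ℝ => u + r • w) w t := by
    simpa using ((hasDerivAt_id t).smul_const w).const_add u
  have := h.hasFDerivAt.comp_hasDerivAt t hline
  simp only [InnerProductSpace.toDual_apply_apply] at this
  exact this

lemma le_add_inner_add_half_mul_norm_sq_of_lipschitz_gradient [CompleteSpace E] {f' : E → E}
    (hf : ∀ u, HasGradientAt f (f' u) u) {L : ℝ} (hL : ∀ u v, ‖f' u - f' v‖ ≤ L * ‖u - v‖)
    (u v : E) : f v ≤ f u + ⟪f' u, v - u⟫ + L / 2 * ‖v - u‖ ^ 2 := by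
  set w := v - u
  let g : ℝ → ℝ := fun t => f (u + t • w) - t * ⟪f' u, w⟫ - L / 2 * ‖w‖ ^ 2 * t ^ 2
  have hg : ∀ t, HasDerivAt g (⟪f' (u + t • w) - f' u, w⟫ - L * ‖w‖ ^ 2 * t) t := fun t => by
    refine ((((hf (u + t • w)).hasDerivAt_comp_add_smul).sub
      ((hasDerivAt_id t).mul_const ⟪f' u, w⟫)).sub
      ((hasDerivAt_pow 2 t).const_mul (L / 2 * ‖w‖ ^ 2))).congr_deriv ?_
    rw [inner_sub_left]
    ring
  have hdiff : Differentiable ℝ g := fun t => (hg t).differentiableAt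
  have hanti : AntitoneOn g (Icc 0 1) := by
    refine antitoneOn_of_deriv_nonpos (convex_Icc 0 1) hdiff.continuous.continuousOn
      hdiff.differentiableOn fun t ht => ?_
    rw [interior_Icc] at ht
    rw [(hg t).deriv, sub_nonpos]
    calc ⟪f' (u + t • w) - f' u, w⟫ ≤ ‖f' (u + t • w) - f' u‖ * ‖w‖ := real_inner_le_norm _ _
      _ ≤ L * ‖t • w‖ * ‖w‖ := by
          gcongr
          simpa using hL (u + t • w) u
      _ = L * ‖w‖ ^ 2 * t := by rw [norm_smul, Real.norm_of_nonneg ht.1.le]; ring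
  have h01 := hanti (left_mem_Icc.2 zero_le_one) (right_mem_Icc.2 zero_le_one) zero_le_one
  simp only [g, w, zero_smul, add_zero, one_smul, add_sub_cancel] at h01
  linarith

lemma strongConvexOn_half_mul_norm_sub_sq (hs : Convex ℝ s) (m : ℝ) (x : E) :
    StrongConvexOn s m fun u => m / 2 * ‖u - x‖ ^ 2 := by
  rw [strongConvexOn_iff_convex]
  refine (((innerSL ℝ (-m • x)).toLinearMap.convexOn hs).add_const (m / 2 * ‖x‖ ^ 2)).congr
    fun u _ => ?_
  simp only [Pi.add_apply, ContinuousLinearMap.coe_coe, innerSL_apply_apply, real_inner_smul_left,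
    norm_sub_sq_real, real_inner_comm x]
  ring

lemma strongConvexOn_prox_objective (hs : Convex ℝ s) (hφ : ConvexOn ℝ s φ) (c : ℝ) (G x : E)
    (α : ℝ) :
    StrongConvexOn s α⁻¹ fun u => c + ⟪G, u - x⟫ + 1 / (2 * α) * ‖u - x‖ ^ 2 + φ u := by
  have haffine : ConvexOn ℝ s fun u => c + ⟪G, u - x⟫ + φ u :=
    ((((innerSL ℝ G).toLinearMap.convexOn hs).add_const (c - ⟪G, x⟫)).add hφ).congr fun u _ => by
      simp only [Pi.add_apply, ContinuousLinearMap.coe_coe, innerSL_apply_apply, inner_sub_right]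
      ring
  convert (strongConvexOn_half_mul_norm_sub_sq hs α⁻¹ x).add_convexOn haffine using 1
  funext u
  simp only [Pi.add_apply]
  ring

lemma prox_three_point (hs : Convex ℝ s) (hφ : ConvexOn ℝ s φ) {c α : ℝ} (hα : 0 < α)
    {G x p y : E} (hmin : IsMinOn (fun u => c + ⟪G, u - x⟫ + 1 / (2 * α) * ‖u - x‖ ^ 2 + φ u) s p)
    (hp : p ∈ s) (hy : y ∈ s) :
    ‖p - x‖ ^ 2 + ‖y - p‖ ^ 2 ≤ ‖y - x‖ ^ 2 + 2 * α * (⟪G, y - p⟫ + φ y - φ p) := by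
  have h := (strongConvexOn_prox_objective hs hφ c G x α).add_half_mul_norm_sq_le_of_isMinOn
    hmin hp hy
  have hGp : ⟪G, y - p⟫ = ⟪G, y - x⟫ - ⟪G, p - x⟫ := by
    rw [← inner_sub_right, sub_sub_sub_cancel_right]
  rw [hGp]
  field_simp at h
  linarith

lemma two_mul_inner_le_inv_mul_norm_sq_add_mul_norm_sq {ε : ℝ} (hε : 0 < ε) (a b : E) :
    2 * ⟪a, b⟫ ≤ ε⁻¹ * ‖a‖ ^ 2 + ε * ‖b‖ ^ 2 :=
  calc 2 * ⟪a, b⟫ ≤ 2 * ‖b‖ * ‖a‖ := by linarith [real_inner_le_norm a b]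
    _ ≤ ε * ‖b‖ ^ 2 + ε⁻¹ * ‖a‖ ^ 2 := two_mul_le_add_mul_sq hε
    _ = ε⁻¹ * ‖a‖ ^ 2 + ε * ‖b‖ ^ 2 := add_comm _ _

end InnerProductSpace

theorem one_step_contraction_strongly_convex_general
    {d : ℕ} (X : Set (EuclideanSpace ℝ (Fin d))) (hX : Convex ℝ X)
    (f : EuclideanSpace ℝ (Fin d) → ℝ)
    (gradf : EuclideanSpace ℝ (Fin d) → EuclideanSpace ℝ (Fin d))
    (hgrad : ∀ u, HasGradientAt f (gradf u) u)
    (c L : ℝ) (hL : 0 < L)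
    (hLip : ∀ u v, ‖gradf u - gradf v‖ ≤ L * ‖u - v‖)
    (hsc : ∀ u v, f u + ⟪gradf u, v - u⟫ + (c / 2) * ‖v - u‖ ^ 2 ≤ f v)
    (φ : EuclideanSpace ℝ (Fin d) → ℝ) (hφ : ConvexOn ℝ X φ)
    (xstar : EuclideanSpace ℝ (Fin d)) (hxstarX : xstar ∈ X)
    (hmin : ∀ u ∈ X, f xstar + φ xstar ≤ f u + φ u)
    (x : EuclideanSpace ℝ (Fin d))
    (G : EuclideanSpace ℝ (Fin d))
    (α : ℝ) (hα0 : 0 < α) (hαL : α < 1 / L)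
    (xplus : EuclideanSpace ℝ (Fin d)) (hplusX : xplus ∈ X)
    (hplus : ∀ u ∈ X,
      f x + ⟪G, xplus - x⟫ + (1 / (2 * α)) * ‖xplus - x‖ ^ 2 + φ xplus
        ≤ f x + ⟪G, u - x⟫ + (1 / (2 * α)) * ‖u - x‖ ^ 2 + φ u) :
    ‖xplus - xstar‖ ^ 2 ≤ (1 - c * α) * ‖x - xstar‖ ^ 2
      + (α ^ 2 / (1 - L * α)) * ‖G - gradf x‖ ^ 2
      + 2 * α * ⟪G - gradf x, xstar - x⟫ := by
  have hβ : 0 < 1 - L * α := by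
    have := (lt_div_iff₀ hL).mp hαL
    linarith
  have hA := prox_three_point hX hφ hα0 hplus hplusX hxstarX
  have hB := le_add_inner_add_half_mul_norm_sq_of_lipschitz_gradient hgrad hLip x xplus
  have hC := hsc x xstar
  have hD := hmin xplus hplusX
  have hE := two_mul_inner_le_inv_mul_norm_sq_add_mul_norm_sq hβ (-α • (G - gradf x)) (xplus - x)
  rw [real_inner_smul_left, norm_smul, Real.norm_eq_abs, abs_neg, abs_of_pos hα0] at hE
  have hinner : ⟪G - gradf x, xstar - x⟫ - ⟪G - gradf x, xplus - x⟫
      = ⟪G, xstar - xplus⟫ - ⟪gradf x, xstar - x⟫ + ⟪gradf x, xplus - x⟫ := by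
    simp only [inner_sub_left, inner_sub_right]
    ring
  rw [norm_sub_rev xplus, norm_sub_rev x]
  linear_combination hA + 2 * α * (hB + hC + hD) + hE - 2 * α * hinner

/-- One-step contraction for the inexact proximal gradient step with a `c`-strongly convex,
`L`-smooth `f`: with `ε = G - ∇f(x)` and
`x⁺ = argmin_{u ∈ X} { f(x) + ⟨G, u - x⟩ + (1/(2α))‖u - x‖² + φ(u) }`,
`‖x⁺ - x*‖² ≤ (1 - cα)‖x - x*‖² + (α²/(1 - Lα))‖ε‖² + 2α⟨ε, x* - x⟩`. -/
theorem one_step_contraction_strongly_convex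
    {d : ℕ} (X : Set (EuclideanSpace ℝ (Fin d))) (hXc : IsClosed X) (hX : Convex ℝ X)
    (f : EuclideanSpace ℝ (Fin d) → ℝ)
    (gradf : EuclideanSpace ℝ (Fin d) → EuclideanSpace ℝ (Fin d))
    (hgrad : ∀ u, HasGradientAt f (gradf u) u)
    (c L : ℝ) (hc : 0 < c) (hL : 0 < L)
    (hLip : ∀ u v, ‖gradf u - gradf v‖ ≤ L * ‖u - v‖)
    (hsc : ∀ u v, f u + ⟪gradf u, v - u⟫ + (c / 2) * ‖v - u‖ ^ 2 ≤ f v)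
    (φ : EuclideanSpace ℝ (Fin d) → ℝ) (hφ : ConvexOn ℝ X φ)
    (xstar : EuclideanSpace ℝ (Fin d)) (hxstarX : xstar ∈ X)
    (hmin : ∀ u ∈ X, f xstar + φ xstar ≤ f u + φ u)
    (x : EuclideanSpace ℝ (Fin d)) (hx : x ∈ X)
    (G : EuclideanSpace ℝ (Fin d))
    (α : ℝ) (hα0 : 0 < α) (hαL : α < 1 / L)
    (xplus : EuclideanSpace ℝ (Fin d)) (hplusX : xplus ∈ X)
    (hplus : ∀ u ∈ X,
      f x + ⟪G, xplus - x⟫ + (1 / (2 * α)) * ‖xplus - x‖ ^ 2 + φ xplus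
        ≤ f x + ⟪G, u - x⟫ + (1 / (2 * α)) * ‖u - x‖ ^ 2 + φ u) :
    ‖xplus - xstar‖ ^ 2 ≤ (1 - c * α) * ‖x - xstar‖ ^ 2
      + (α ^ 2 / (1 - L * α)) * ‖G - gradf x‖ ^ 2
      + 2 * α * ⟪G - gradf x, xstar - x⟫ :=
  one_step_contraction_strongly_convex_general X hX f gradf hgrad c L hL hLip hsc φ hφ xstar hxstarX
    hmin x G α hα0 hαL xplus hplusX hplus
end

section
/- Let f : ℝ^d → ℝ be differentiable, c-strongly convex with L-Lipschitz gradient, φ : X → ℝ convex on closed convex X ⊆ ℝ^d, x* the unique minimizer of g = f + φ over X, g* = g(x*). Fix x ∈ X, G ∈ ℝ^d, α ∈ (0, 1/L), ε = G − ∇f(x), and x⁺ = argmin_{u ∈ X} { f(x) + ⟨G, u − x⟩ + (1/(2α))‖u − x‖² + φ(u) }. Then g(x⁺) − g* ≤ ((1/α − c)/2)‖x − x*‖² + ⟨ε, x* − x⟩ + (α/(2(1 − Lα)))‖ε‖². -/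
/-!
Three inequalities are added up: the descent lemma for `f` between `x` and `x⁺`, strong
convexity of `f` between `x` and `x*`, and the three-point inequality at `x*` for the proximal
model, which is `1/α`-strongly convex and minimized over `X` at `x⁺`. What is left is the cross
term `⟨ε, x - x⁺⟩` against `-((1/α - L)/2)‖x⁺ - x‖²`, and Young's inequality turns it into
`(α / (2(1 - Lα)))‖ε‖²`.
-/

open Real Filter Topology Set
open scoped RealInnerProductSpace

section

variable {F : Type*} [NormedAddCommGroup F] [InnerProductSpace ℝ F]

lemma HasGradientAt.hasDerivAt_comp_add_smul_s14 [CompleteSpace F] {f : F → ℝ} {g x v : F} {t : ℝ}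
    (hf : HasGradientAt f g (x + t • v)) :
    HasDerivAt (fun s : ℝ => f (x + s • v)) ⟪g, v⟫ t := by
  have hline : HasDerivAt (fun s : ℝ => x + s • v) v t := by
    simpa using ((hasDerivAt_id t).smul_const v).const_add x
  simpa [InnerProductSpace.toDual_apply_apply, Function.comp_def] using
    hf.hasFDerivAt.comp_hasDerivAt t hline

theorem image_le_add_inner_add_sq_of_gradient_lipschitz [CompleteSpace F] {f : F → ℝ}
    {g : F → F} (hgrad : ∀ u, HasGradientAt f (g u) u) {L : ℝ}
    (hLip : ∀ u v, ‖g u - g v‖ ≤ L * ‖u - v‖) (x y : F) :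
    f y ≤ f x + ⟪g x, y - x⟫ + L / 2 * ‖y - x‖ ^ 2 := by
  set v := y - x
  let ψ : ℝ → ℝ := fun t => f (x + t • v) - t * ⟪g x, v⟫ - L / 2 * ‖v‖ ^ 2 * t ^ 2
  have hψ : ∀ t, HasDerivAt ψ (⟪g (x + t • v) - g x, v⟫ - L * ‖v‖ ^ 2 * t) t := by
    intro t
    refine ((((hgrad _).hasDerivAt_comp_add_smul_s14).sub
      ((hasDerivAt_id t).mul_const ⟪g x, v⟫)).sub
      ((hasDerivAt_pow 2 t).const_mul (L / 2 * ‖v‖ ^ 2))).congr_deriv ?_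
    rw [inner_sub_left]
    push_cast
    ring
  have hderiv_nonpos : ∀ t ∈ interior (Icc (0 : ℝ) 1), deriv ψ t ≤ 0 := by
    intro t ht
    rw [interior_Icc] at ht
    rw [(hψ t).deriv, sub_nonpos]
    calc ⟪g (x + t • v) - g x, v⟫ ≤ ‖g (x + t • v) - g x‖ * ‖v‖ := real_inner_le_norm _ _
      _ ≤ L * ‖t • v‖ * ‖v‖ := by gcongr; simpa using hLip (x + t • v) x
      _ = L * ‖v‖ ^ 2 * t := by rw [norm_smul, norm_of_nonneg ht.1.le]; ring
  have hanti : AntitoneOn ψ (Icc 0 1) :=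
    antitoneOn_of_deriv_nonpos (convex_Icc 0 1)
      (fun t _ => (hψ t).continuousAt.continuousWithinAt)
      (fun t _ => (hψ t).differentiableAt.differentiableWithinAt) hderiv_nonpos
  have h := hanti (left_mem_Icc.2 zero_le_one) (right_mem_Icc.2 zero_le_one) zero_le_one
  simp only [ψ, v, zero_smul, add_zero, one_smul, add_sub_cancel] at h
  linarith

lemma StrongConvexOn.add_sq_norm_sub_le_of_isMinOn {s : Set F} {m : ℝ} {f : F → ℝ} {x y : F}
    (hf : StrongConvexOn s m f) (hmin : IsMinOn f s x) (hx : x ∈ s) (hy : y ∈ s) :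
    f x + m / 2 * ‖y - x‖ ^ 2 ≤ f y := by
  have hsegment : ∀ t ∈ Ioo (0 : ℝ) 1, f x + (1 - t) * (m / 2 * ‖y - x‖ ^ 2) ≤ f y := by
    rintro t ⟨ht0, ht1⟩
    have hconv := hf.2 hx hy (sub_nonneg.2 ht1.le) ht0.le (sub_add_cancel 1 t)
    have hle := isMinOn_iff.1 hmin _ (hf.1 hx hy (sub_nonneg.2 ht1.le) ht0.le (sub_add_cancel 1 t))
    rw [norm_sub_rev, smul_eq_mul, smul_eq_mul] at hconv
    refine le_of_mul_le_mul_left ?_ ht0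
    linarith
  have hlim : Tendsto (fun t : ℝ => f x + (1 - t) * (m / 2 * ‖y - x‖ ^ 2)) (𝓝[>] 0)
      (𝓝 (f x + m / 2 * ‖y - x‖ ^ 2)) := by
    have hcont : Continuous fun t : ℝ => f x + (1 - t) * (m / 2 * ‖y - x‖ ^ 2) := by fun_prop
    simpa using (hcont.tendsto 0).mono_left nhdsWithin_le_nhds
  exact le_of_tendsto hlim (eventually_of_mem (Ioo_mem_nhdsGT one_pos) hsegment)

lemma ConvexOn.strongConvexOn_inner_add_sq_norm_sub_add {s : Set F} {φ : F → ℝ}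
    (hφ : ConvexOn ℝ s φ) (a : ℝ) (G x : F) (α : ℝ) :
    StrongConvexOn s (1 / α) fun u => a + ⟪G, u - x⟫ + 1 / (2 * α) * ‖u - x‖ ^ 2 + φ u := by
  rw [strongConvexOn_iff_convex]
  have haffine : ConvexOn ℝ s
      fun u => ⟪G - (1 / α) • x, u⟫ + (a - ⟪G, x⟫ + 1 / (2 * α) * ‖x‖ ^ 2) :=
    ((innerₗ F (G - (1 / α) • x)).convexOn hφ.1).add_const _
  refine (haffine.add hφ).congr fun u _ => ?_
  simp only [Pi.add_apply, inner_sub_left, inner_sub_right, real_inner_smul_left,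
    norm_sub_sq_real, real_inner_comm x u]
  ring

lemma real_inner_le_young {γ : ℝ} (hγ : 0 < γ) (a b : F) :
    ⟪a, b⟫ ≤ 1 / (2 * γ) * ‖a‖ ^ 2 + γ / 2 * ‖b‖ ^ 2 := by
  have hsq : 2 * γ * ⟪a, b⟫ ≤ ‖a‖ ^ 2 + γ ^ 2 * ‖b‖ ^ 2 := by
    have h := norm_sub_sq_real a (γ • b)
    rw [real_inner_smul_right, norm_smul, norm_of_nonneg hγ.le] at h
    nlinarith [sq_nonneg ‖a - γ • b‖]
  rw [← mul_le_mul_iff_right₀ (by positivity : 0 < 2 * γ)]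
  calc 2 * γ * ⟪a, b⟫ ≤ ‖a‖ ^ 2 + γ ^ 2 * ‖b‖ ^ 2 := hsq
    _ = 2 * γ * (1 / (2 * γ) * ‖a‖ ^ 2 + γ / 2 * ‖b‖ ^ 2) := by field_simp

end

theorem one_step_gap_strongly_convex_general
    {d : ℕ} (X : Set (EuclideanSpace ℝ (Fin d)))
    (f : EuclideanSpace ℝ (Fin d) → ℝ)
    (gradf : EuclideanSpace ℝ (Fin d) → EuclideanSpace ℝ (Fin d))
    (hgrad : ∀ u, HasGradientAt f (gradf u) u)
    (c L : ℝ)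
    (hLip : ∀ u v, ‖gradf u - gradf v‖ ≤ L * ‖u - v‖)
    (hsc : ∀ u v, f u + ⟪gradf u, v - u⟫ + (c / 2) * ‖v - u‖ ^ 2 ≤ f v)
    (φ : EuclideanSpace ℝ (Fin d) → ℝ) (hφ : ConvexOn ℝ X φ)
    (xstar : EuclideanSpace ℝ (Fin d)) (hxstarX : xstar ∈ X)
    (x : EuclideanSpace ℝ (Fin d))
    (G : EuclideanSpace ℝ (Fin d))
    (α : ℝ) (hα0 : 0 < α) (hαL : α < 1 / L)
    (xplus : EuclideanSpace ℝ (Fin d)) (hplusX : xplus ∈ X)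
    (hplus : ∀ u ∈ X,
      f x + ⟪G, xplus - x⟫ + (1 / (2 * α)) * ‖xplus - x‖ ^ 2 + φ xplus
        ≤ f x + ⟪G, u - x⟫ + (1 / (2 * α)) * ‖u - x‖ ^ 2 + φ u) :
    (f xplus + φ xplus) - (f xstar + φ xstar)
      ≤ ((1 / α - c) / 2) * ‖x - xstar‖ ^ 2 + ⟪G - gradf x, xstar - x⟫
        + (α / (2 * (1 - L * α))) * ‖G - gradf x‖ ^ 2 := by
  have hL : 0 < L := one_div_pos.1 (hα0.trans hαL)
  have hγ : 0 < 1 / α - L := sub_pos.2 ((lt_one_div hα0 hL).1 hαL)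
  have hdescent := image_le_add_inner_add_sq_of_gradient_lipschitz hgrad hLip x xplus
  have hthreePoint := (hφ.strongConvexOn_inner_add_sq_norm_sub_add (f x) G x α)
    |>.add_sq_norm_sub_le_of_isMinOn (isMinOn_iff.2 hplus) hplusX hxstarX
  have hyoung := real_inner_le_young hγ (G - gradf x) (x - xplus)
  have hinner : ⟪G - gradf x, x - xplus⟫ = ⟪gradf x, xplus - x⟫ - ⟪G, xplus - x⟫ := by
    rw [← neg_sub xplus x, inner_neg_right, inner_sub_left]
    ring
  have hcoef : α / (2 * (1 - L * α)) = 1 / (2 * (1 / α - L)) := by field_simp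
  have hhalf : 1 / (2 * α) = 1 / α / 2 := by ring
  rw [hcoef, norm_sub_rev x xstar, inner_sub_left]
  rw [norm_sub_rev x xplus, hinner] at hyoung
  rw [hhalf] at hthreePoint
  have hgap : 0 ≤ 1 / α / 2 * ‖xstar - xplus‖ ^ 2 := by positivity
  linarith [hsc x xstar]

/-- One-step optimality-gap bound for the inexact proximal gradient step with a `c`-strongly
convex, `L`-smooth `f`: with `ε = G - ∇f(x)` and
`x⁺ = argmin_{u ∈ X} { f(x) + ⟨G, u - x⟩ + (1/(2α))‖u - x‖² + φ(u) }`,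
`g(x⁺) - g* ≤ ((1/α - c)/2)‖x - x*‖² + ⟨ε, x* - x⟩ + (α/(2(1 - Lα)))‖ε‖²`. -/
theorem one_step_gap_strongly_convex
    {d : ℕ} (X : Set (EuclideanSpace ℝ (Fin d))) (hXc : IsClosed X) (hX : Convex ℝ X)
    (f : EuclideanSpace ℝ (Fin d) → ℝ)
    (gradf : EuclideanSpace ℝ (Fin d) → EuclideanSpace ℝ (Fin d))
    (hgrad : ∀ u, HasGradientAt f (gradf u) u)
    (c L : ℝ) (hc : 0 < c) (hL : 0 < L)
    (hLip : ∀ u v, ‖gradf u - gradf v‖ ≤ L * ‖u - v‖)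
    (hsc : ∀ u v, f u + ⟪gradf u, v - u⟫ + (c / 2) * ‖v - u‖ ^ 2 ≤ f v)
    (φ : EuclideanSpace ℝ (Fin d) → ℝ) (hφ : ConvexOn ℝ X φ)
    (xstar : EuclideanSpace ℝ (Fin d)) (hxstarX : xstar ∈ X)
    (hmin : ∀ u ∈ X, f xstar + φ xstar ≤ f u + φ u)
    (x : EuclideanSpace ℝ (Fin d)) (hx : x ∈ X)
    (G : EuclideanSpace ℝ (Fin d))
    (α : ℝ) (hα0 : 0 < α) (hαL : α < 1 / L)
    (xplus : EuclideanSpace ℝ (Fin d)) (hplusX : xplus ∈ X)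
    (hplus : ∀ u ∈ X,
      f x + ⟪G, xplus - x⟫ + (1 / (2 * α)) * ‖xplus - x‖ ^ 2 + φ xplus
        ≤ f x + ⟪G, u - x⟫ + (1 / (2 * α)) * ‖u - x‖ ^ 2 + φ u) :
    (f xplus + φ xplus) - (f xstar + φ xstar)
      ≤ ((1 / α - c) / 2) * ‖x - xstar‖ ^ 2 + ⟪G - gradf x, xstar - x⟫
        + (α / (2 * (1 - L * α))) * ‖G - gradf x‖ ^ 2 :=
  one_step_gap_strongly_convex_general X f gradf hgrad c L hLip hsc φ hφ xstar hxstarX x G α hα0 hαL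
    xplus hplusX hplus
end
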